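/- arXiv:0911.5650 — 4 statements merged into one kernel-verified Lean document; each statement's English description precedes it below -/
import Mathlib

section
/- Let d ≥ 1 and let m = (m_1,…,m_d) ∈ ℕ^d be such that every component m_i is odd. Set N = ∏_{i=1}^d m_i. Then there exists a bijection ĥ_m : {1,…,N} → {1,…,m_1} × ⋯ × {1,…,m_d} such that ∑_{i=1}^d |ĥ_m(j+1)_i − ĥ_m(j)_i| = 1 for every j = 1,…,N−1, ĥ_m(1) = (1,…,1), and ĥ_m(N) = m. -/
/-!
Snake (boustrophedon) order, built one dimension at a time. If `h` runs through the box
`∏_{i ≥ 1} [1, m_i]` from `(1,…,1)` to `(m_1,…)` in `P` unit steps, sweep the layers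
`x_0 = 1, 2, …, m_0` in turn, running `h` forwards in odd layers and backwards in even ones;
consecutive layers are joined by a single step in `x_0`. Since `m_0` is odd, the sweep ends
in layer `m_0` with `h` run forwards, i.e. at `m`.
-/

open Set

variable {d : ℕ}

def gridDist (x y : Fin d → ℕ) : ℤ := ∑ i, |(x i : ℤ) - y i|

lemma gridDist_comm (x y : Fin d → ℕ) : gridDist x y = gridDist y x := by
  simp only [gridDist, abs_sub_comm]

lemma gridDist_cons (a b : ℕ) (x y : Fin d → ℕ) :
    gridDist (Fin.cons a x : Fin (d + 1) → ℕ) (Fin.cons b y) = |(a : ℤ) - b| + gridDist x y := by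
  simp [gridDist, Fin.sum_univ_succ]

def gridBox (m : Fin d → ℕ) : Set (Fin d → ℕ) := {k | ∀ i, k i ∈ Icc 1 (m i)}

lemma cons_mem_gridBox_cons {m : Fin d → ℕ} {a x : ℕ} {k : Fin d → ℕ} :
    (Fin.cons x k : Fin (d + 1) → ℕ) ∈ gridBox (Fin.cons a m) ↔ x ∈ Icc 1 a ∧ k ∈ gridBox m := by
  simp [gridBox, Fin.forall_fin_succ]

lemma bijOn_cons_gridBox {m : Fin d → ℕ} {h : ℕ → Fin d → ℕ} {t : Set ℕ}
    (hh : BijOn h t (gridBox m)) (a : ℕ) :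
    BijOn (fun p : ℕ × ℕ => (Fin.cons p.1 (h p.2) : Fin (d + 1) → ℕ))
      (Icc 1 a ×ˢ t) (gridBox (Fin.cons a m)) := by
  refine ⟨?_, ?_, ?_⟩
  · rintro ⟨x, y⟩ ⟨hx, hy⟩
    exact cons_mem_gridBox_cons.2 ⟨hx, hh.mapsTo hy⟩
  · rintro ⟨x, y⟩ ⟨-, hy⟩ ⟨x', y'⟩ ⟨-, hy'⟩ e
    obtain ⟨rfl, e⟩ := Fin.cons_inj.1 e
    exact Prod.ext rfl (hh.injOn hy hy' e)
  · intro k hk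
    rw [← Fin.cons_self_tail k, cons_mem_gridBox_cons] at hk
    obtain ⟨y, hy, hyk⟩ := hh.surjOn hk.2
    exact ⟨(k 0, y), ⟨hk.1, hy⟩, by simp only [hyk, Fin.cons_self_tail]⟩

def IsGridSnake (m : Fin d → ℕ) (h : ℕ → Fin d → ℕ) : Prop :=
  BijOn h (Icc 1 (∏ i, m i)) (gridBox m) ∧
    (∀ j, 1 ≤ j → j + 1 ≤ ∏ i, m i → gridDist (h (j + 1)) (h j) = 1) ∧
    h 1 = (fun _ => 1) ∧ h (∏ i, m i) = m

/-- The `j`-th cell (counting from `1`) of the snake through `[1, ∞) × [1, P]` that runs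
up the odd columns and down the even ones. -/
def boustrophedon (P j : ℕ) : ℕ × ℕ :=
  ((j - 1) / P + 1, if Even ((j - 1) / P) then (j - 1) % P + 1 else P - (j - 1) % P)

section Boustrophedon

variable {P : ℕ}

lemma boustrophedon_mul_add (q : ℕ) {r : ℕ} (hr : r < P) :
    boustrophedon P (q * P + r + 1) = (q + 1, if Even q then r + 1 else P - r) := by
  have hP : 0 < P := by omega
  have hdiv : (q * P + r) / P = q := by
    rw [add_comm, Nat.add_mul_div_right _ _ hP, Nat.div_eq_of_lt hr, zero_add]
  have hmod : (q * P + r) % P = r := by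
    rw [add_comm, Nat.add_mul_mod_self_right, Nat.mod_eq_of_lt hr]
  simp only [boustrophedon, Nat.add_sub_cancel, hdiv, hmod]

lemma exists_eq_mul_add_of_pos (hP : 0 < P) {j : ℕ} (hj : 1 ≤ j) :
    ∃ q r, r < P ∧ j = q * P + r + 1 :=
  ⟨(j - 1) / P, (j - 1) % P, Nat.mod_lt _ hP, by have := Nat.div_add_mod' (j - 1) P; omega⟩

lemma boustrophedon_one (hP : 0 < P) : boustrophedon P 1 = (1, 1) := by
  simpa using boustrophedon_mul_add 0 hP

lemma boustrophedon_mul_of_odd (hP : 0 < P) {a : ℕ} (ha : Odd a) :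
    boustrophedon P (a * P) = (a, P) := by
  obtain ⟨k, rfl⟩ := ha
  have h := boustrophedon_mul_add (2 * k) (Nat.sub_lt hP one_pos)
  rw [if_pos (even_two_mul k), Nat.sub_add_cancel (Nat.one_le_of_lt hP)] at h
  rwa [show (2 * k + 1) * P = 2 * k * P + (P - 1) + 1 by rw [add_one_mul]; omega]

lemma boustrophedon_bijOn (hP : 0 < P) (a : ℕ) :
    BijOn (boustrophedon P) (Icc 1 (a * P)) (Icc 1 a ×ˢ Icc 1 P) := by
  refine ⟨?_, ?_, ?_⟩
  · rintro j ⟨hj1, hj⟩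
    obtain ⟨q, r, hr, rfl⟩ := exists_eq_mul_add_of_pos hP hj1
    have hq : q < a := by
      by_contra! h
      nlinarith [Nat.mul_le_mul_right P h]
    rw [boustrophedon_mul_add q hr]
    split_ifs <;> simp only [mem_prod, mem_Icc] <;> omega
  · rintro j ⟨hj1, -⟩ j' ⟨hj1', -⟩ hjj'
    obtain ⟨q, r, hr, rfl⟩ := exists_eq_mul_add_of_pos hP hj1
    obtain ⟨q', r', hr', rfl⟩ := exists_eq_mul_add_of_pos hP hj1'
    rw [boustrophedon_mul_add q hr, boustrophedon_mul_add q' hr', Prod.mk.injEq] at hjj'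
    obtain ⟨hq, hrr⟩ := hjj'
    obtain rfl : q = q' := by omega
    obtain rfl : r = r' := by split_ifs at hrr <;> omega
    rfl
  · rintro ⟨x, y⟩ ⟨⟨hx1, hxa⟩, ⟨hy1, hyP⟩⟩
    have hr : (if Even (x - 1) then y - 1 else P - y) < P := by split_ifs <;> omega
    refine ⟨(x - 1) * P + (if Even (x - 1) then y - 1 else P - y) + 1, ⟨by omega, ?_⟩, ?_⟩
    · have : (x - 1) * P + P ≤ a * P := by
        rw [← Nat.succ_mul]
        exact Nat.mul_le_mul_right P (by omega)
      omega
    · rw [boustrophedon_mul_add _ hr]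
      split_ifs <;> simp only [Prod.mk.injEq] <;> omega

lemma boustrophedon_succ (hP : 0 < P) {j : ℕ} (hj : 1 ≤ j) :
    ∃ x y, (boustrophedon P j = (x, y) ∧ boustrophedon P (j + 1) = (x, y + 1)) ∨
      (boustrophedon P j = (x, y + 1) ∧ boustrophedon P (j + 1) = (x, y)) ∨
      (boustrophedon P j = (x, y) ∧ boustrophedon P (j + 1) = (x + 1, y)) := by
  obtain ⟨q, r, hr, rfl⟩ := exists_eq_mul_add_of_pos hP hj
  rcases Nat.lt_or_ge (r + 1) P with hr' | hr'
  · rw [show q * P + r + 1 + 1 = q * P + (r + 1) + 1 by ring, boustrophedon_mul_add q hr,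
      boustrophedon_mul_add q hr']
    by_cases hq : Even q
    · exact ⟨q + 1, r + 1, Or.inl (by simp [hq])⟩
    · exact ⟨q + 1, P - (r + 1), Or.inr (Or.inl (by simp [hq]; omega))⟩
  · obtain rfl : P = r + 1 := by omega
    rw [show q * (r + 1) + r + 1 + 1 = (q + 1) * (r + 1) + 0 + 1 by ring,
      boustrophedon_mul_add q hr, boustrophedon_mul_add (q + 1) hP]
    refine ⟨q + 1, if Even q then r + 1 else 1, Or.inr (Or.inr ?_)⟩
    by_cases hq : Even q <;> simp [hq, Nat.even_add_one]

end Boustrophedon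

lemma IsGridSnake.cons {m : Fin d → ℕ} {h : ℕ → Fin d → ℕ} (hh : IsGridSnake m h)
    (hP : 0 < ∏ i, m i) {a : ℕ} (ha : Odd a) :
    IsGridSnake (Fin.cons a m) fun j =>
      Fin.cons (boustrophedon (∏ i, m i) j).1 (h (boustrophedon (∏ i, m i) j).2) := by
  obtain ⟨hbij, hadj, h1, hlast⟩ := hh
  rw [IsGridSnake, Fin.prod_cons]
  set P := ∏ i, m i
  have hb := boustrophedon_bijOn hP a
  refine ⟨(bijOn_cons_gridBox hbij a).comp hb, ?_, ?_, ?_⟩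
  · intro j hj hjN
    have hj₀ := hb.mapsTo ⟨hj, by omega⟩
    have hj₁ := hb.mapsTo ⟨by omega, hjN⟩
    obtain ⟨x, y, ⟨e₀, e₁⟩ | ⟨e₀, e₁⟩ | ⟨e₀, e₁⟩⟩ := boustrophedon_succ hP hj <;>
      rw [e₀] at hj₀ <;> rw [e₁] at hj₁ <;>
      simp only [mem_prod, mem_Icc] at hj₀ hj₁ <;>
      simp only [e₀, e₁, gridDist_cons, sub_self, abs_zero, zero_add]
    · exact hadj y hj₀.2.1 hj₁.2.2
    · rw [gridDist_comm]
      exact hadj y hj₁.2.1 hj₀.2.2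
    · simp [gridDist]
  · ext i
    refine Fin.cases ?_ (fun i => ?_) i <;> simp [boustrophedon_one hP, h1]
  · simp only [boustrophedon_mul_of_odd hP ha, hlast]

lemma isGridSnake_elim0 : IsGridSnake (Fin.elim0 : Fin 0 → ℕ) fun _ => Fin.elim0 := by
  refine ⟨⟨fun _ _ i => i.elim0, fun j hj j' hj' _ => ?_, fun _ _ => ⟨1, ?_, Subsingleton.elim _ _⟩⟩,
    fun j hj hj' => ?_, Subsingleton.elim _ _, Subsingleton.elim _ _⟩
  · simp only [Finset.univ_eq_empty, Finset.prod_empty, mem_Icc] at hj hj'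
    omega
  · simp
  · simp only [Finset.univ_eq_empty, Finset.prod_empty] at hj'
    omega

theorem exists_isGridSnake (m : Fin d → ℕ) (hm : ∀ i, Odd (m i)) : ∃ h, IsGridSnake m h := by
  induction m using Fin.consInduction with
  | elim0 => exact ⟨_, isGridSnake_elim0⟩
  | cons a m ih =>
    have hm' : ∀ i, Odd (m i) := fun i => by simpa using hm i.succ
    obtain ⟨h, hh⟩ := ih hm'
    exact ⟨_, hh.cons (Finset.prod_pos fun i _ => (hm' i).pos) (by simpa using hm 0)⟩

theorem stmt1_general (d : ℕ) (m : Fin d → ℕ) (hm : ∀ i, Odd (m i)) :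
    ∃ h : ℕ → (Fin d → ℕ),
      Set.BijOn h (Set.Icc 1 (∏ i, m i)) {k | ∀ i, k i ∈ Set.Icc 1 (m i)} ∧
      (∀ j : ℕ, 1 ≤ j → j + 1 ≤ ∏ i, m i →
        ∑ i : Fin d, |((h (j + 1) i : ℤ) - (h j i : ℤ))| = 1) ∧
      h 1 = (fun _ => 1) ∧ h (∏ i, m i) = m :=
  exists_isGridSnake m hm

/-- Finite snake: if all components of `m ∈ ℕ^d` are odd and `N = ∏ m i`, there is a
bijection `h` from `{1,…,N}` onto `{1,…,m_1} × ⋯ × {1,…,m_d}` such that consecutive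
values are grid-adjacent, `h 1 = (1,…,1)` and `h N = m`. -/
theorem stmt1 (d : ℕ) (hd : 1 ≤ d) (m : Fin d → ℕ) (hm : ∀ i, Odd (m i)) :
    ∃ h : ℕ → (Fin d → ℕ),
      Set.BijOn h (Set.Icc 1 (∏ i, m i)) {k | ∀ i, k i ∈ Set.Icc 1 (m i)} ∧
      (∀ j : ℕ, 1 ≤ j → j + 1 ≤ ∏ i, m i →
        ∑ i : Fin d, |((h (j + 1) i : ℤ) - (h j i : ℤ))| = 1) ∧
      h 1 = (fun _ => 1) ∧ h (∏ i, m i) = m :=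
  stmt1_general d m hm
end

section
/- Let d ≥ 1, let m = (m_1,…,m_d) ∈ ℕ^d have all components odd, set N = ∏_{i=1}^d m_i, and let p ∈ {1,…,d}. Define m̄ = (m_1,…,m_{p−1}, m_p+2, m_{p+1},…,m_d) and N̄ = ∏_{i=1}^d m̄_i. Then every bijection ĥ_m : {1,…,N} → {1,…,m_1} × ⋯ × {1,…,m_d} satisfying ∑_i |ĥ_m(j+1)_i − ĥ_m(j)_i| = 1 for all j = 1,…,N−1, ĥ_m(1) = (1,…,1) and ĥ_m(N) = m, can be extended to a bijection ĥ_{m̄} : {1,…,N̄} → {1,…,m̄_1} × ⋯ × {1,…,m̄_d} satisfying ∑_i |ĥ_{m̄}(j+1)_i − ĥ_{m̄}(j)_i| = 1 for all j = 1,…,N̄−1, ĥ_{m̄}(1) = (1,…,1), ĥ_{m̄}(N̄) = m̄, and ĥ_{m̄}(j) = ĥ_m(j) for all j = 1,…,N. -/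
/-!
Let `m'` be the cross-section of `m` orthogonal to the `p`-th axis. The enlarged box is the old
one together with the two layers `k_p = m_p + 1` and `k_p = m_p + 2`, each a copy of the box `m'`.
Given a snake `g` of `m'` from `(1,…,1)` to `m'`, the extension follows `h` to `m`, steps up into
the first layer and runs through it along `g` backwards, arriving above `(1,…,1)`; it then steps
up again and runs through the second layer along `g`, ending at `m̄`.

Such a `g` exists because all sides of `m'` are odd: starting from the one-point box, the same
extension step grows any side by `2`, with the cross-sections handled by induction on the
dimension.
-/

open Set Function

namespace LatticeSnake

variable {ι α : Type*} [Fintype ι]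

def l1Dist (a b : ι → ℕ) : ℤ := ∑ i, |(a i : ℤ) - b i|

theorem l1Dist_comm (a b : ι → ℕ) : l1Dist a b = l1Dist b a := by
  simp only [l1Dist, abs_sub_comm]

theorem l1Dist_self (a : ι → ℕ) : l1Dist a a = 0 := by
  simp [l1Dist]

theorem l1Dist_insertNth {n : ℕ} (p : Fin (n + 1)) (a b : ℕ) (x y : Fin n → ℕ) :
    l1Dist (p.insertNth a x) (p.insertNth b y) = |(a : ℤ) - b| + l1Dist x y := by
  simp [l1Dist, Fin.sum_univ_succAbove _ p]

def IsUnitStepPath (g : ℕ → ι → ℕ) (L : ℕ) : Prop :=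
  ∀ j, 1 ≤ j → j + 1 ≤ L → l1Dist (g (j + 1)) (g j) = 1

def latticeBox (m : ι → ℕ) : Set (ι → ℕ) := {k | ∀ i, k i ∈ Icc 1 (m i)}

structure IsSnake (m : ι → ℕ) (g : ℕ → ι → ℕ) : Prop where
  bijOn : BijOn g (Icc 1 (∏ i, m i)) (latticeBox m)
  isUnitStepPath : IsUnitStepPath g (∏ i, m i)
  apply_one : g 1 = fun _ => 1
  apply_prod : g (∏ i, m i) = m

theorem bijOn_sub_Icc (A B : ℕ) : BijOn (· - A) (Icc (A + 1) (A + B)) (Icc 1 B) := by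
  refine InvOn.bijOn (f' := (· + A)) ⟨?_, ?_⟩ ?_ ?_ <;> intro j hj <;>
    simp only [mem_Icc] at * <;> omega

theorem bijOn_reflect_Icc (L : ℕ) : BijOn (L + 1 - ·) (Icc 1 L) (Icc 1 L) := by
  refine InvOn.bijOn (f' := (L + 1 - ·)) ⟨?_, ?_⟩ ?_ ?_ <;> intro j hj <;>
    simp only [mem_Icc] at * <;> omega

def concatAt (g : ℕ → α) (A : ℕ) (g' : ℕ → α) : ℕ → α :=
  fun j => if j ≤ A then g j else g' (j - A)

section concatAt

variable {g g' : ℕ → α} {A B j : ℕ}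

theorem concatAt_of_le (h : j ≤ A) : concatAt g A g' j = g j := if_pos h

theorem concatAt_of_lt (h : A < j) : concatAt g A g' j = g' (j - A) := if_neg h.not_ge

theorem bijOn_concatAt {s t : Set α} (hg : BijOn g (Icc 1 A) s) (hg' : BijOn g' (Icc 1 B) t)
    (hst : Disjoint s t) : BijOn (concatAt g A g') (Icc 1 (A + B)) (s ∪ t) := by
  have h₁ : BijOn (concatAt g A g') (Icc 1 A) s :=
    hg.congr fun j hj => (concatAt_of_le hj.2).symm
  have h₂ : BijOn (concatAt g A g') (Icc (A + 1) (A + B)) t :=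
    (hg'.comp (bijOn_sub_Icc A B)).congr fun j hj => (concatAt_of_lt hj.1).symm
  have hdom : Icc 1 (A + B) = Icc 1 A ∪ Icc (A + 1) (A + B) := by
    ext; simp only [mem_union, mem_Icc]; omega
  have hdisj : Disjoint (Icc 1 A) (Icc (A + 1) (A + B)) :=
    Set.disjoint_left.2 fun j h h' => by simp only [mem_Icc] at h h'; omega
  rw [hdom]
  exact h₁.union h₂ <| (injOn_union hdisj).2 ⟨h₁.injOn, h₂.injOn,
    fun x hx y hy => hst.ne_of_mem (h₁.mapsTo hx) (h₂.mapsTo hy)⟩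

end concatAt

section paths

variable {g g' : ℕ → ι → ℕ} {A B L : ℕ}

theorem IsUnitStepPath.concatAt (hg : IsUnitStepPath g A) (hg' : IsUnitStepPath g' B)
    (hjoin : l1Dist (g' 1) (g A) = 1) : IsUnitStepPath (concatAt g A g') (A + B) := by
  intro j hj hjB
  rcases lt_trichotomy j A with hjA | rfl | hjA
  · rw [concatAt_of_le hjA, concatAt_of_le hjA.le]
    exact hg j hj hjA
  · rw [concatAt_of_lt (by omega : j < j + 1), concatAt_of_le le_rfl, Nat.add_sub_cancel_left]
    exact hjoin
  · rw [concatAt_of_lt (by omega), concatAt_of_lt hjA, show j + 1 - A = j - A + 1 by omega]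
    exact hg' _ (by omega) (by omega)

theorem IsUnitStepPath.reverse (hg : IsUnitStepPath g L) :
    IsUnitStepPath (fun j => g (L + 1 - j)) L := by
  intro j hj hjL
  dsimp only
  rw [show L + 1 - j = L - j + 1 by omega, show L + 1 - (j + 1) = L - j by omega, l1Dist_comm]
  exact hg _ (by omega) (by omega)

theorem IsUnitStepPath.insertNth {n : ℕ} {g : ℕ → Fin n → ℕ} (hg : IsUnitStepPath g L)
    (p : Fin (n + 1)) (c : ℕ) : IsUnitStepPath (fun j => p.insertNth c (g j)) L :=
  fun j hj hjL => by simpa [l1Dist_insertNth] using hg j hj hjL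

end paths

section boxes

variable {n : ℕ} (p : Fin (n + 1))

theorem mem_latticeBox_iff {m k : Fin (n + 1) → ℕ} :
    k ∈ latticeBox m ↔ k p ∈ Icc 1 (m p) ∧ p.removeNth k ∈ latticeBox (p.removeNth m) :=
  p.forall_iff_succAbove

theorem mem_image_insertNth_iff (c : α) (s : Set (Fin n → α)) (k : Fin (n + 1) → α) :
    k ∈ p.insertNth c '' s ↔ k p = c ∧ p.removeNth k ∈ s := by
  constructor
  · rintro ⟨x, hx, rfl⟩
    simpa using hx
  · rintro ⟨rfl, hk⟩
    exact ⟨_, hk, Fin.insertNth_self_removeNth p k⟩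

theorem latticeBox_update_add_two (m : Fin (n + 1) → ℕ) :
    latticeBox (update m p (m p + 2)) = latticeBox m ∪
      (p.insertNth (m p + 1) '' latticeBox (p.removeNth m) ∪
        p.insertNth (m p + 2) '' latticeBox (p.removeNth m)) := by
  ext k
  simp only [mem_union, mem_latticeBox_iff p, mem_image_insertNth_iff, Fin.removeNth_update,
    update_self, mem_Icc]
  by_cases hk : p.removeNth k ∈ latticeBox (p.removeNth m)
  · simp only [hk, and_true]
    omega
  · simp only [hk, and_false, or_false]

theorem disjoint_image_insertNth {c c' : α} (h : c ≠ c') (s t : Set (Fin n → α)) :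
    Disjoint (Fin.insertNth (α := fun _ => α) p c '' s)
      (Fin.insertNth (α := fun _ => α) p c' '' t) :=
  Set.disjoint_left.2 fun k hk hk' => h <|
    ((mem_image_insertNth_iff p c s k).1 hk).1.symm.trans
      ((mem_image_insertNth_iff p c' t k).1 hk').1

theorem disjoint_latticeBox_image_insertNth {m : Fin (n + 1) → ℕ} {c : ℕ} (hc : m p < c)
    (s : Set (Fin n → ℕ)) : Disjoint (latticeBox m) (p.insertNth c '' s) :=
  Set.disjoint_left.2 fun k hk hk' => by
    have hkm := ((mem_latticeBox_iff p).1 hk).1.2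
    rw [((mem_image_insertNth_iff p c s k).1 hk').1] at hkm
    omega

theorem _root_.Set.BijOn.insertNth {s : Set ℕ} {t : Set (Fin n → α)} {g : ℕ → Fin n → α}
    (hg : BijOn g s t) (c : α) :
    BijOn (fun j => p.insertNth c (g j)) s (Fin.insertNth (α := fun _ => α) p c '' t) :=
  (Fin.insertNth_right_injective (α := fun _ => α) (p := p) c).injOn.bijOn_image.comp hg

end boxes

theorem IsSnake.extend {n : ℕ} {m : Fin (n + 1) → ℕ} {h : ℕ → Fin (n + 1) → ℕ}
    {g : ℕ → Fin n → ℕ} (p : Fin (n + 1))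
    (hN : 0 < ∏ i, m i) (hh : IsSnake m h) (hg : IsSnake (p.removeNth m) g) :
    ∃ h', IsSnake (update m p (m p + 2)) h' ∧ ∀ j ∈ Icc 1 (∏ i, m i), h' j = h j := by
  set N := ∏ i, m i
  set Q := ∏ i, p.removeNth m i
  have hNQ : N = m p * Q := Fin.prod_univ_succAbove m p
  have hQ : 0 < Q := Nat.pos_of_mul_pos_left (hNQ ▸ hN)
  have hprod : ∏ i, update m p (m p + 2) i = N + (Q + Q) := by
    rw [Fin.prod_univ_succAbove _ p, update_self, hNQ]
    simp only [← Fin.removeNth_apply, Fin.removeNth_update]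
    ring
  have hhN : h N = m := hh.apply_prod
  have hgQ : g Q = p.removeNth m := hg.apply_prod
  set layers : ℕ → Fin (n + 1) → ℕ :=
    concatAt (fun j => p.insertNth (m p + 1) (g (Q + 1 - j))) Q
      (fun j => p.insertNth (m p + 2) (g j)) with hlayers
  refine ⟨concatAt h N layers, ⟨?_, ?_, ?_, ?_⟩, fun j hj => concatAt_of_le hj.2⟩
  · rw [hprod, latticeBox_update_add_two]
    refine bijOn_concatAt hh.bijOn (bijOn_concatAt ?_ (hg.bijOn.insertNth p _) ?_) ?_
    · exact (hg.bijOn.comp (bijOn_reflect_Icc Q)).insertNth p _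
    · exact disjoint_image_insertNth p (by omega) _ _
    · exact (disjoint_latticeBox_image_insertNth p (by omega) _).union_right
        (disjoint_latticeBox_image_insertNth p (by omega) _)
  · rw [hprod]
    refine hh.isUnitStepPath.concatAt ((hg.isUnitStepPath.reverse.insertNth p _).concatAt
      (hg.isUnitStepPath.insertNth p _) ?_) ?_
    · rw [l1Dist_insertNth, Nat.add_sub_cancel_left, l1Dist_self]
      norm_num
    · rw [hlayers, concatAt_of_le hQ, Nat.add_sub_cancel, hgQ, hhN]
      conv_lhs => arg 2; rw [← Fin.insertNth_self_removeNth p m]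
      rw [l1Dist_insertNth, l1Dist_self]
      norm_num
  · rw [concatAt_of_le hN, hh.apply_one]
  · rw [hprod, concatAt_of_lt (by omega), Nat.add_sub_cancel_left, hlayers,
      concatAt_of_lt (by omega), Nat.add_sub_cancel_left, hgQ, Fin.insertNth_removeNth]

theorem isSnake_one : IsSnake (fun _ : ι => 1) (fun _ _ => 1) where
  bijOn := by
    simp only [Finset.prod_const_one, Icc_self]
    refine ⟨fun _ _ _ => ⟨le_rfl, le_rfl⟩, injOn_singleton _ _, fun k hk => ⟨1, rfl, ?_⟩⟩
    exact funext fun i => le_antisymm (hk i).1 (hk i).2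
  isUnitStepPath j hj hj' := by simp only [Finset.prod_const_one] at hj'; omega
  apply_one := rfl
  apply_prod := rfl

theorem exists_isSnake_succ {n : ℕ}
    (ih : ∀ m : Fin n → ℕ, (∀ i, Odd (m i)) → ∃ g, IsSnake m g)
    (m : Fin (n + 1) → ℕ) (hm : ∀ i, Odd (m i)) : ∃ h, IsSnake m h := by
  induction hs : ∑ i, m i using Nat.strong_induction_on generalizing m with
  | _ s IH =>
  by_cases hone : ∀ i, m i = 1
  · obtain rfl : m = fun _ => 1 := funext hone
    exact ⟨_, isSnake_one⟩
  obtain ⟨p, hp⟩ := not_forall.1 hone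
  have hp3 : 3 ≤ m p := by obtain ⟨k, hk⟩ := hm p; omega
  set m₀ := update m p (m p - 2)
  have hm₀ : ∀ i, Odd (m₀ i) := by
    intro i
    rcases eq_or_ne i p with rfl | hi
    · simpa [m₀] using Nat.Odd.sub_even (by omega) (hm i) even_two
    · simpa [m₀, hi] using hm i
  have hlt : ∑ i, m₀ i < s := hs ▸ Finset.sum_lt_sum
    (fun i _ => by rcases eq_or_ne i p with rfl | hi <;> simp [m₀, *])
    ⟨p, Finset.mem_univ _, by simp [m₀]; omega⟩
  obtain ⟨h₀, hh₀⟩ := IH _ hlt m₀ hm₀ rfl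
  obtain ⟨g, hg⟩ := ih (p.removeNth m₀) fun i => hm₀ _
  obtain ⟨h, hh, -⟩ := hh₀.extend p (Finset.prod_pos fun i _ => (hm₀ i).pos) hg
  have hm : update m₀ p (m₀ p + 2) = m := by simp [m₀]; omega
  exact ⟨h, hm ▸ hh⟩

theorem exists_isSnake : ∀ {n : ℕ} (m : Fin n → ℕ), (∀ i, Odd (m i)) →
    ∃ g, IsSnake m g
  | 0, m, _ => ⟨_, Subsingleton.elim (fun _ => 1) m ▸ isSnake_one⟩
  | _ + 1, m, hm => exists_isSnake_succ (fun m' hm' => exists_isSnake m' hm') m hm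

end LatticeSnake

theorem stmt2_general (d : ℕ) (m : Fin d → ℕ) (hm : ∀ i, Odd (m i)) (p : Fin d)
    (h : ℕ → Fin d → ℕ)
    (hbij : Set.BijOn h (Set.Icc 1 (∏ i, m i)) {k | ∀ i, k i ∈ Set.Icc 1 (m i)})
    (hadj : ∀ j : ℕ, 1 ≤ j → j + 1 ≤ ∏ i, m i →
      ∑ i : Fin d, |((h (j + 1) i : ℤ) - (h j i : ℤ))| = 1)
    (hstart : h 1 = fun _ => 1) (hend : h (∏ i, m i) = m) :
    ∃ h' : ℕ → Fin d → ℕ,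
      Set.BijOn h' (Set.Icc 1 (∏ i, Function.update m p (m p + 2) i))
        {k | ∀ i, k i ∈ Set.Icc 1 (Function.update m p (m p + 2) i)} ∧
      (∀ j : ℕ, 1 ≤ j → j + 1 ≤ ∏ i, Function.update m p (m p + 2) i →
        ∑ i : Fin d, |((h' (j + 1) i : ℤ) - (h' j i : ℤ))| = 1) ∧
      h' 1 = (fun _ => 1) ∧
      h' (∏ i, Function.update m p (m p + 2) i) = Function.update m p (m p + 2) ∧
      ∀ j ∈ Set.Icc 1 (∏ i, m i), h' j = h j := by
  obtain ⟨n, rfl⟩ := Nat.exists_eq_add_one_of_ne_zero p.pos.ne'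
  obtain ⟨g, hg⟩ := LatticeSnake.exists_isSnake (p.removeNth m) fun i => hm _
  obtain ⟨h', hh', hagree⟩ := LatticeSnake.IsSnake.extend p
    (Finset.prod_pos fun i _ => (hm i).pos) ⟨hbij, hadj, hstart, hend⟩ hg
  exact ⟨h', hh'.bijOn, hh'.isUnitStepPath, hh'.apply_one, hh'.apply_prod, hagree⟩

/-- Extension of the finite snake: a snake filling `{1,…,m_1} × ⋯ × {1,…,m_d}` (all `m_i`
odd) from `(1,…,1)` to `m` extends to a snake filling the box where the `p`-th side is
enlarged by `2`, ending at `m̄ = m + 2 e_p`. -/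
theorem stmt2 (d : ℕ) (hd : 1 ≤ d) (m : Fin d → ℕ) (hm : ∀ i, Odd (m i)) (p : Fin d)
    (h : ℕ → Fin d → ℕ)
    (hbij : Set.BijOn h (Set.Icc 1 (∏ i, m i)) {k | ∀ i, k i ∈ Set.Icc 1 (m i)})
    (hadj : ∀ j : ℕ, 1 ≤ j → j + 1 ≤ ∏ i, m i →
      ∑ i : Fin d, |((h (j + 1) i : ℤ) - (h j i : ℤ))| = 1)
    (hstart : h 1 = fun _ => 1) (hend : h (∏ i, m i) = m) :
    ∃ h' : ℕ → Fin d → ℕ,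
      Set.BijOn h' (Set.Icc 1 (∏ i, Function.update m p (m p + 2) i))
        {k | ∀ i, k i ∈ Set.Icc 1 (Function.update m p (m p + 2) i)} ∧
      (∀ j : ℕ, 1 ≤ j → j + 1 ≤ ∏ i, Function.update m p (m p + 2) i →
        ∑ i : Fin d, |((h' (j + 1) i : ℤ) - (h' j i : ℤ))| = 1) ∧
      h' 1 = (fun _ => 1) ∧
      h' (∏ i, Function.update m p (m p + 2) i) = Function.update m p (m p + 2) ∧
      ∀ j ∈ Set.Icc 1 (∏ i, m i), h' j = h j :=
  stmt2_general d m hm p h hbij hadj hstart hend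
end

section
/- Let d ≥ 1 and r = (r_1,…,r_d) ∈ (0,∞)^d. For α > 0 and k ∈ ℕ^d define ψ_k^α(x) = (2^{d/2}/(α^{d/2}√(∏_{i=1}^d r_i))) ∏_{i=1}^d sin(k_i π x_i / (α r_i)) on the open box B_α = (0, α r_1)×⋯×(0, α r_d), and for i ∈ {1,…,d} let f_i(k) ∈ ℕ^d be obtained from k by adding 1 to its i-th component. Let Z : ℝ^d → ℝ be measurable, essentially bounded on some neighborhood of the origin, and (Fréchet) differentiable at the origin with ∂_i Z(0) ≠ 0 for every i = 1,…,d. Then there exists α_0 > 0 such that for every α ∈ (0, α_0), every k ∈ ℕ^d and every i ∈ {1,…,d}, ∫_{B_α} Z(x) ψ_k^α(x) ψ_{f_i(k)}^α(x) dx ≠ 0. -/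
open MeasureTheory

/-- The normalized Dirichlet eigenfunctions of the Laplacian on the scaled orthotope
`(0, α r_1) × ⋯ × (0, α r_d)`. -/
noncomputable def psiA (d : ℕ) (r : Fin d → ℝ) (α : ℝ) (k : Fin d → ℕ)
    (x : Fin d → ℝ) : ℝ :=
  (2 : ℝ) ^ ((d : ℝ) / 2) / (α ^ ((d : ℝ) / 2) * Real.sqrt (∏ i, r i)) *
    ∏ i, Real.sin (k i * Real.pi * x i / (α * r i))

open Real Set Filter Topology intervalIntegral

/-!
On the orthotope `B = ∏ⱼ (0, Lⱼ)`, `Lⱼ = α rⱼ`, the product `ψ_k ψ_{k + eᵢ}` is a positive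
multiple of `W(x) = ∏ⱼ sin(kⱼπxⱼ/Lⱼ) sin(k'ⱼπxⱼ/Lⱼ)`. Its `i`-th factor has mean zero on
`(0, Lᵢ)`, because `sin(kπs) sin((k+1)πs) = (cos(πs) - cos((2k+1)πs)) / 2`, but first moment
`-4k(k+1)Lᵢ² / ((2k+1)²π²)`. Hence, writing `Z(x) = Z(0) + DZ(0)x + R(x)`, the constant and the
coordinates `xⱼ`, `j ≠ i`, integrate to zero against `W`, and `xᵢ` gives `∂ᵢZ(0)` times a
quantity of size at least `Lᵢ ∏ⱼ (Lⱼ/2) / π²` (as `8k(k+1) ≥ (2k+1)²`), uniformly in `k`. The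
remainder obeys `|R(x)| ≤ ε‖x‖ ≤ εα‖r‖` on `B` for small `α`, so it contributes at most
`εα‖r‖ ∏ⱼ Lⱼ`, which is smaller once `ε` is small compared with `|∂ᵢZ(0)| rᵢ / ‖r‖`.
-/

theorem integral_cos_nat_mul_pi {n : ℕ} (hn : n ≠ 0) :
    ∫ s in (0 : ℝ)..1, cos (n * π * s) = 0 := by
  rw [integral_comp_mul_left (fun s => cos s) (by positivity), integral_cos]
  simp [sin_nat_mul_pi]

theorem integral_mul_cos_nat_mul_pi {n : ℕ} (hn : n ≠ 0) :
    ∫ s in (0 : ℝ)..1, s * cos (n * π * s) = ((-1) ^ n - 1) / (n * π) ^ 2 := by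
  set c : ℝ := n * π with hc_def
  have hc : c ≠ 0 := by positivity
  have hderiv : ∀ s ∈ uIcc (0 : ℝ) 1,
      HasDerivAt (fun s => s * sin (c * s) / c + cos (c * s) / c ^ 2) (s * cos (c * s)) s := by
    intro s _
    have hlin : HasDerivAt (fun s => c * s) c s := by simpa using (hasDerivAt_id s).const_mul c
    refine ((((hasDerivAt_id' s).mul hlin.sin).div_const c).add
      (hlin.cos.div_const (c ^ 2))).congr_deriv ?_
    field_simp
    ring
  rw [integral_eq_sub_of_hasDerivAt hderiv (Continuous.intervalIntegrable (by fun_prop) _ _),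
    hc_def]
  simp [sin_nat_mul_pi, cos_nat_mul_pi]
  ring

noncomputable def sinPair (a b : ℕ) (s : ℝ) : ℝ := sin (a * π * s) * sin (b * π * s)

@[fun_prop]
theorem continuous_sinPair (a b : ℕ) : Continuous (sinPair a b) := by
  unfold sinPair
  fun_prop

theorem sinPair_succ (k : ℕ) (s : ℝ) :
    sinPair k (k + 1) s = (cos ((1 : ℕ) * π * s) - cos ((2 * k + 1 : ℕ) * π * s)) / 2 := by
  rw [sinPair, eq_div_iff two_ne_zero, mul_comm, ← mul_assoc, two_mul_sin_mul_sin,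
    ← cos_neg (_ - _)]
  push_cast
  ring_nf

theorem sinPair_self (k : ℕ) (s : ℝ) :
    sinPair k k s = (1 - cos ((2 * k : ℕ) * π * s)) / 2 := by
  rw [sinPair, eq_div_iff two_ne_zero, mul_comm, ← mul_assoc, two_mul_sin_mul_sin, sub_self,
    cos_zero]
  push_cast
  ring_nf

theorem integral_sinPair_succ (k : ℕ) : ∫ s in (0 : ℝ)..1, sinPair k (k + 1) s = 0 := by
  simp_rw [sinPair_succ, intervalIntegral.integral_div]
  rw [integral_sub (Continuous.intervalIntegrable (by fun_prop) _ _)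
    (Continuous.intervalIntegrable (by fun_prop) _ _), integral_cos_nat_mul_pi one_ne_zero,
    integral_cos_nat_mul_pi (by omega)]
  simp

theorem integral_sinPair_self {k : ℕ} (hk : k ≠ 0) :
    ∫ s in (0 : ℝ)..1, sinPair k k s = 1 / 2 := by
  simp_rw [sinPair_self, intervalIntegral.integral_div]
  rw [integral_sub intervalIntegrable_const (Continuous.intervalIntegrable (by fun_prop) _ _),
    integral_cos_nat_mul_pi (by omega)]
  simp

theorem integral_mul_sinPair_succ (k : ℕ) :
    ∫ s in (0 : ℝ)..1, s * sinPair k (k + 1) s =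
      -(4 * k * (k + 1)) / ((2 * k + 1) * π) ^ 2 := by
  simp_rw [sinPair_succ, mul_div_assoc', intervalIntegral.integral_div, mul_sub]
  rw [integral_sub (Continuous.intervalIntegrable (by fun_prop) _ _)
    (Continuous.intervalIntegrable (by fun_prop) _ _), integral_mul_cos_nat_mul_pi one_ne_zero,
    integral_mul_cos_nat_mul_pi (by omega), pow_succ (-1 : ℝ) (2 * k), pow_mul]
  push_cast
  field_simp
  ring

theorem one_le_eight_mul_mul_succ_div_sq {k : ℕ} (hk : 1 ≤ k) :
    1 ≤ 8 * (k : ℝ) * (k + 1) / (2 * k + 1) ^ 2 := by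
  have hk' : (1 : ℝ) ≤ k := by exact_mod_cast hk
  rw [one_le_div (by positivity)]
  nlinarith

theorem setIntegral_Ioo_zero_comp_div (f : ℝ → ℝ) {L : ℝ} (hL : 0 < L) :
    ∫ t in Ioo 0 L, f (t / L) = L * ∫ s in (0 : ℝ)..1, f s := by
  rw [← integral_Ioc_eq_integral_Ioo, ← integral_of_le hL.le, integral_comp_div f hL.ne',
    zero_div, div_self hL.ne', smul_eq_mul]

theorem setIntegral_Ioo_zero_mul_comp_div (f : ℝ → ℝ) {L : ℝ} (hL : 0 < L) :
    ∫ t in Ioo 0 L, t * f (t / L) = L ^ 2 * ∫ s in (0 : ℝ)..1, s * f s := by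
  have hscale : ∀ t, t * f (t / L) = L * (t / L * f (t / L)) := fun t => by
    field_simp
  simp_rw [hscale]
  rw [MeasureTheory.integral_const_mul, setIntegral_Ioo_zero_comp_div (fun s => s * f s) hL]
  ring

section Orthotope

variable {ι : Type*} [Fintype ι]

theorem setIntegral_univ_pi_prod (s : ι → Set ℝ) (f : ι → ℝ → ℝ) :
    ∫ x in univ.pi s, ∏ j, f j (x j) = ∏ j, ∫ t in s j, f j t := by
  rw [volume_pi, Measure.restrict_pi_pi, integral_fintype_prod_eq_prod]

theorem setIntegral_univ_pi_eval_mul_prod [DecidableEq ι] (s : ι → Set ℝ) (f : ι → ℝ → ℝ)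
    (i : ι) :
    ∫ x in univ.pi s, x i * ∏ j, f j (x j) =
      (∫ t in s i, t * f i t) * ∏ j ∈ Finset.univ.erase i, ∫ t in s j, f j t := by
  have hi := Finset.mem_univ i
  have hprod : ∀ x : ι → ℝ,
      x i * ∏ j, f j (x j) = ∏ j, Function.update f i (fun t => t * f i t) j (x j) := by
    intro x
    rw [← Finset.mul_prod_erase _ _ hi, ← Finset.mul_prod_erase _ _ hi, Function.update_self,
      mul_assoc]
    congr 2
    exact Finset.prod_congr rfl fun j hj => by
      rw [Function.update_of_ne (Finset.ne_of_mem_erase hj)]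
  simp_rw [hprod]
  rw [setIntegral_univ_pi_prod, ← Finset.mul_prod_erase _ _ hi, Function.update_self]
  congr 1
  exact Finset.prod_congr rfl fun j hj => by rw [Function.update_of_ne (Finset.ne_of_mem_erase hj)]

def orthotope (L : ι → ℝ) : Set (ι → ℝ) := univ.pi fun j => Ioo 0 (L j)

theorem volume_orthotope_ne_top (L : ι → ℝ) : volume (orthotope L) ≠ ⊤ := by
  rw [orthotope, Real.volume_pi_Ioo]
  exact ENNReal.prod_ne_top fun _ _ => ENNReal.ofReal_ne_top

theorem measureReal_orthotope {L : ι → ℝ} (hL : ∀ j, 0 < L j) :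
    volume.real (orthotope L) = ∏ j, L j := by
  simp [orthotope, measureReal_def, Real.volume_pi_Ioo, ENNReal.toReal_prod, (hL _).le]

theorem norm_le_of_mem_orthotope {L x : ι → ℝ} (hx : x ∈ orthotope L) : ‖x‖ ≤ ‖L‖ :=
  pi_norm_le_iff_of_nonneg (norm_nonneg L) |>.2 fun j => by
    have hxj := hx j (mem_univ j)
    rw [Real.norm_eq_abs, abs_of_pos hxj.1]
    exact hxj.2.le.trans ((le_abs_self _).trans (norm_le_pi_norm L j))

theorem integrableOn_orthotope_of_continuous {f : (ι → ℝ) → ℝ} (hf : Continuous f)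
    (L : ι → ℝ) : IntegrableOn f (orthotope L) :=
  (hf.integrableOn_Icc (a := 0) (b := L)).mono_set
    (pi_univ_Icc (0 : ι → ℝ) L ▸ pi_mono fun _ _ => Ioo_subset_Icc_self)

noncomputable def sinModeProd (L : ι → ℝ) (k k' : ι → ℕ) (x : ι → ℝ) : ℝ :=
  ∏ j, sinPair (k j) (k' j) (x j / L j)

@[fun_prop]
theorem continuous_sinModeProd (L : ι → ℝ) (k k' : ι → ℕ) :
    Continuous (sinModeProd L k k') :=
  continuous_finsetProd _ fun j _ => by fun_prop

theorem abs_mul_sinModeProd_le {y C : ℝ} (h : |y| ≤ C) (L : ι → ℝ) (k k' : ι → ℕ)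
    (x : ι → ℝ) : |y * sinModeProd L k k' x| ≤ C := by
  have hW : |sinModeProd L k k' x| ≤ 1 := by
    rw [sinModeProd, Finset.abs_prod]
    refine Finset.prod_le_one (fun j _ => abs_nonneg _) fun j _ => ?_
    rw [sinPair, abs_mul]
    exact mul_le_one₀ (abs_sin_le_one _) (abs_nonneg _) (abs_sin_le_one _)
  rw [abs_mul]
  exact (mul_le_of_le_one_right (abs_nonneg _) hW).trans h

theorem integrableOn_mul_sinModeProd_of_abs_le (L : ι → ℝ) (k k' : ι → ℕ)
    {R : (ι → ℝ) → ℝ} (hRm : Measurable R) {C : ℝ} (hR : ∀ x ∈ orthotope L, |R x| ≤ C) :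
    IntegrableOn (fun x => R x * sinModeProd L k k' x) (orthotope L) :=
  Measure.integrableOn_of_bounded (M := C) (volume_orthotope_ne_top L)
    (hRm.mul (continuous_sinModeProd L k k').measurable).aestronglyMeasurable
    ((ae_restrict_iff' (MeasurableSet.univ_pi fun _ => measurableSet_Ioo)).2
      (Eventually.of_forall fun x hx => abs_mul_sinModeProd_le (hR x hx) L k k' x))

theorem abs_setIntegral_mul_sinModeProd_le {L : ι → ℝ} (hL : ∀ j, 0 < L j) (k k' : ι → ℕ)
    {R : (ι → ℝ) → ℝ} {C : ℝ} (hR : ∀ x ∈ orthotope L, |R x| ≤ C) :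
    |∫ x in orthotope L, R x * sinModeProd L k k' x| ≤ C * ∏ j, L j := by
  rw [← measureReal_orthotope hL, ← Real.norm_eq_abs]
  exact norm_setIntegral_le_of_norm_le_const (volume_orthotope_ne_top L).lt_top
    fun x hx => abs_mul_sinModeProd_le (hR x hx) L k k' x

theorem setIntegral_sinModeProd {L : ι → ℝ} (hL : ∀ j, 0 < L j) (k k' : ι → ℕ) :
    ∫ x in orthotope L, sinModeProd L k k' x =
      ∏ j, L j * ∫ s in (0 : ℝ)..1, sinPair (k j) (k' j) s :=
  (setIntegral_univ_pi_prod _ _).trans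
    (Finset.prod_congr rfl fun j _ => setIntegral_Ioo_zero_comp_div _ (hL j))

theorem setIntegral_eval_mul_sinModeProd [DecidableEq ι] {L : ι → ℝ} (hL : ∀ j, 0 < L j)
    (k k' : ι → ℕ) (i : ι) :
    ∫ x in orthotope L, x i * sinModeProd L k k' x =
      L i ^ 2 * (∫ s in (0 : ℝ)..1, s * sinPair (k i) (k' i) s) *
        ∏ j ∈ Finset.univ.erase i, L j * ∫ s in (0 : ℝ)..1, sinPair (k j) (k' j) s :=
  (setIntegral_univ_pi_eval_mul_prod _ _ i).trans (congr_arg₂ _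
    (setIntegral_Ioo_zero_mul_comp_div _ (hL i))
    (Finset.prod_congr rfl fun j _ => setIntegral_Ioo_zero_comp_div _ (hL j)))

variable [DecidableEq ι] {L : ι → ℝ} {k : ι → ℕ} (i : ι)

theorem setIntegral_sinModeProd_update_succ (hL : ∀ j, 0 < L j) :
    ∫ x in orthotope L, sinModeProd L k (Function.update k i (k i + 1)) x = 0 := by
  rw [setIntegral_sinModeProd hL]
  refine Finset.prod_eq_zero (Finset.mem_univ i) ?_
  rw [Function.update_self, integral_sinPair_succ, mul_zero]

theorem setIntegral_eval_mul_sinModeProd_update_succ_of_ne (hL : ∀ j, 0 < L j) {j : ι}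
    (hj : j ≠ i) :
    ∫ x in orthotope L, x j * sinModeProd L k (Function.update k i (k i + 1)) x = 0 := by
  rw [setIntegral_eval_mul_sinModeProd hL]
  refine mul_eq_zero_of_right _
    (Finset.prod_eq_zero (Finset.mem_erase.2 ⟨hj.symm, Finset.mem_univ i⟩) ?_)
  rw [Function.update_self, integral_sinPair_succ, mul_zero]

theorem setIntegral_eval_mul_sinModeProd_update_succ_self (hL : ∀ j, 0 < L j)
    (hk : ∀ j, 1 ≤ k j) :
    ∫ x in orthotope L, x i * sinModeProd L k (Function.update k i (k i + 1)) x =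
      -(8 * k i * (k i + 1) / (2 * k i + 1) ^ 2) / π ^ 2 * L i * ∏ j, L j / 2 := by
  rw [setIntegral_eval_mul_sinModeProd hL, Function.update_self, integral_mul_sinPair_succ,
    ← Finset.mul_prod_erase _ _ (Finset.mem_univ i)]
  have hrest : ∏ j ∈ Finset.univ.erase i,
      L j * ∫ s in (0 : ℝ)..1, sinPair (k j) (Function.update k i (k i + 1) j) s =
        ∏ j ∈ Finset.univ.erase i, L j / 2 :=
    Finset.prod_congr rfl fun j hj => by
      rw [Function.update_of_ne (Finset.ne_of_mem_erase hj),
        integral_sinPair_self (Nat.one_le_iff_ne_zero.1 (hk j))]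
      ring
  rw [hrest]
  have := pi_pos
  field_simp
  ring

theorem setIntegral_affine_mul_sinModeProd_update_succ (hL : ∀ j, 0 < L j) (hk : ∀ j, 1 ≤ k j)
    (a : ℝ) (φ : (ι → ℝ) →L[ℝ] ℝ) :
    ∫ x in orthotope L, (a + φ x) * sinModeProd L k (Function.update k i (k i + 1)) x =
      φ (Pi.single i 1) *
        (-(8 * k i * (k i + 1) / (2 * k i + 1) ^ 2) / π ^ 2 * L i * ∏ j, L j / 2) := by
  set W := sinModeProd L k (Function.update k i (k i + 1))
  have hexpand : ∀ x, (a + φ x) * W x = a * W x + ∑ j, φ (Pi.single j 1) * (x j * W x) := by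
    intro x
    have hφ := φ.toLinearMap.pi_apply_eq_sum_univ x
    simp only [ContinuousLinearMap.coe_coe] at hφ
    rw [hφ, add_mul, Finset.sum_mul]
    congr 1
    refine Finset.sum_congr rfl fun j _ => ?_
    have hsingle : (fun l => if j = l then (1 : ℝ) else 0) = Pi.single j 1 := by
      ext l
      simp [Pi.single_apply, eq_comm]
    rw [hsingle, smul_eq_mul]
    ring
  simp_rw [hexpand]
  have hcoord : ∀ j, IntegrableOn (fun x : ι → ℝ => φ (Pi.single j 1) * (x j * W x))
      (orthotope L) :=
    fun j => integrableOn_orthotope_of_continuous (by fun_prop) L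
  rw [integral_add (integrableOn_orthotope_of_continuous (by fun_prop) L)
      (integrable_finsetSum _ fun j _ => hcoord j),
    MeasureTheory.integral_const_mul, setIntegral_sinModeProd_update_succ i hL, mul_zero, zero_add,
    integral_finsetSum _ fun j _ => hcoord j, Finset.sum_eq_single i]
  · rw [MeasureTheory.integral_const_mul,
      setIntegral_eval_mul_sinModeProd_update_succ_self i hL hk]
  · intro j _ hj
    rw [MeasureTheory.integral_const_mul,
      setIntegral_eval_mul_sinModeProd_update_succ_of_ne i hL hj, mul_zero]
  · exact fun h => absurd (Finset.mem_univ i) h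

theorem setIntegral_mul_sinModeProd_update_succ_ne_zero (hL : ∀ j, 0 < L j) (hk : ∀ j, 1 ≤ k j)
    {Z : (ι → ℝ) → ℝ} (hZ : Measurable Z) (a : ℝ) (φ : (ι → ℝ) →L[ℝ] ℝ) {C : ℝ}
    (hR : ∀ x ∈ orthotope L, |Z x - a - φ x| ≤ C)
    (hC : 2 ^ Fintype.card ι * C < |φ (Pi.single i 1)| * L i / π ^ 2) :
    ∫ x in orthotope L, Z x * sinModeProd L k (Function.update k i (k i + 1)) x ≠ 0 := by
  set W := sinModeProd L k (Function.update k i (k i + 1)) with hW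
  set c := φ (Pi.single i 1)
  set P := ∏ j, L j / 2
  have hP : 0 < P := Finset.prod_pos fun j _ => half_pos (hL j)
  set V := -(8 * k i * (k i + 1) / (2 * k i + 1) ^ 2) / π ^ 2 * L i * P with hV
  have haffine : IntegrableOn (fun x => (a + φ x) * W x) (orthotope L) :=
    integrableOn_orthotope_of_continuous (by fun_prop) L
  have hremainder : IntegrableOn (fun x => (Z x - a - φ x) * W x) (orthotope L) :=
    integrableOn_mul_sinModeProd_of_abs_le L k _
      ((hZ.sub measurable_const).sub φ.continuous.measurable) hR
  have hsplit : ∫ x in orthotope L, Z x * W x =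
      c * V + ∫ x in orthotope L, (Z x - a - φ x) * W x := by
    rw [← setIntegral_affine_mul_sinModeProd_update_succ i hL hk a φ, ← hW,
      ← integral_add haffine hremainder]
    congr 1 with x
    ring
  have hmain : |c| * L i / π ^ 2 * P ≤ |c * V| := by
    have hκ := one_le_eight_mul_mul_succ_div_sq (hk i)
    have := hL i
    rw [hV, neg_div, neg_mul, neg_mul, mul_neg, abs_neg, abs_mul,
      abs_of_pos (a := 8 * k i * (k i + 1) / (2 * k i + 1) ^ 2 / π ^ 2 * L i * P) (by positivity)]
    calc |c| * L i / π ^ 2 * P = |c| * (1 / π ^ 2 * L i * P) := by ring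
      _ ≤ _ := by gcongr
  have hvol : ∏ j, L j = 2 ^ Fintype.card ι * P := by
    rw [← Finset.card_univ, ← Finset.prod_const, ← Finset.prod_mul_distrib]
    exact Finset.prod_congr rfl fun j _ => by ring
  have hE := abs_setIntegral_mul_sinModeProd_le hL k (Function.update k i (k i + 1)) hR
  rw [hvol] at hE
  rw [hsplit]
  intro h
  rw [eq_neg_of_add_eq_zero_left h, abs_neg] at hmain
  nlinarith [mul_lt_mul_of_pos_right hC hP]

end Orthotope

theorem eventually_setIntegral_mul_sinModeProd_update_succ_ne_zero {ι : Type*} [Fintype ι]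
    [DecidableEq ι] {r : ι → ℝ} (hr : ∀ j, 0 < r j) {Z : (ι → ℝ) → ℝ} (hZmeas : Measurable Z)
    (hZdiff : DifferentiableAt ℝ Z 0) {i : ι} (hZi : fderiv ℝ Z 0 (Pi.single i 1) ≠ 0) :
    ∀ᶠ α in 𝓝[>] (0 : ℝ), ∀ k : ι → ℕ, (∀ j, 1 ≤ k j) →
      ∫ x in orthotope (α • r), Z x * sinModeProd (α • r) k (Function.update k i (k i + 1)) x
        ≠ 0 := by
  set φ := fderiv ℝ Z 0
  set c := φ (Pi.single i 1)
  have hc : 0 < |c| := abs_pos.2 hZi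
  have hρ : 0 < ‖r‖ := (hr i).trans_le ((le_abs_self _).trans (norm_le_pi_norm r i))
  set ε := |c| * r i / (2 ^ (Fintype.card ι + 1) * π ^ 2 * ‖r‖)
  have hε : 0 < ε := by have := hr i; positivity
  obtain ⟨δ, hδ, hZδ⟩ : ∃ δ > 0, ∀ x, ‖x‖ < δ → |Z x - Z 0 - φ x| ≤ ε * ‖x‖ := by
    have := (hasFDerivAt_iff_isLittleO_nhds_zero.1 hZdiff.hasFDerivAt).def hε
    simpa [Real.norm_eq_abs] using Metric.eventually_nhds_iff.1 this
  filter_upwards [self_mem_nhdsWithin, nhdsWithin_le_nhds (eventually_lt_nhds (div_pos hδ hρ))]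
    with α (hα : 0 < α) hαδ k hk
  refine setIntegral_mul_sinModeProd_update_succ_ne_zero i (fun j => mul_pos hα (hr j)) hk
    hZmeas (Z 0) φ (C := ε * (α * ‖r‖)) (fun x hx => ?_) ?_
  · have hx : ‖x‖ ≤ α * ‖r‖ := (norm_le_of_mem_orthotope (L := α • r) hx).trans_eq
      (by rw [norm_smul, Real.norm_of_nonneg hα.le])
    exact (hZδ x (hx.trans_lt ((lt_div_iff₀ hρ).1 hαδ))).trans (by gcongr)
  · have := hr i
    calc 2 ^ Fintype.card ι * (ε * (α * ‖r‖)) = |c| * (α * r i) / π ^ 2 / 2 := by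
          simp only [ε]
          field_simp
          ring
      _ < |c| * (α * r i) / π ^ 2 := half_lt_self (by positivity)

theorem psiA_mul_psiA (d : ℕ) (r : Fin d → ℝ) (α : ℝ) (k k' : Fin d → ℕ) (x : Fin d → ℝ) :
    psiA d r α k x * psiA d r α k' x =
      ((2 : ℝ) ^ ((d : ℝ) / 2) / (α ^ ((d : ℝ) / 2) * √(∏ i, r i))) ^ 2 *
        sinModeProd (α • r) k k' x := by
  simp only [psiA, sinModeProd, sinPair, Pi.smul_apply, smul_eq_mul, mul_div_assoc,
    Finset.prod_mul_distrib]
  ring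

theorem stmt6_general (d : ℕ) (r : Fin d → ℝ) (hr : ∀ i, 0 < r i)
    (Z : (Fin d → ℝ) → ℝ) (hZmeas : Measurable Z)
    (hZdiff : DifferentiableAt ℝ Z 0)
    (hZgrad : ∀ i : Fin d, fderiv ℝ Z 0 (Pi.single i 1) ≠ 0) :
    ∃ α₀ > 0, ∀ α : ℝ, 0 < α → α < α₀ →
      ∀ k : Fin d → ℕ, (∀ i, 1 ≤ k i) → ∀ i : Fin d,
        (∫ x in Set.univ.pi fun j => Set.Ioo 0 (α * r j),
            Z x * psiA d r α k x * psiA d r α (Function.update k i (k i + 1)) x) ≠ 0 := by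
  have hsmall := eventually_all.2 fun i =>
    eventually_setIntegral_mul_sinModeProd_update_succ_ne_zero hr hZmeas hZdiff (hZgrad i)
  obtain ⟨α₀, hα₀, hsub⟩ := mem_nhdsGT_iff_exists_Ioo_subset.1 hsmall
  refine ⟨α₀, hα₀, fun α hα hαα₀ k hk i => ?_⟩
  simp_rw [mul_assoc, psiA_mul_psiA, mul_left_comm (Z _)]
  rw [MeasureTheory.integral_const_mul]
  have hnorm : √(∏ j, r j) ≠ 0 := (Real.sqrt_pos.2 (Finset.prod_pos fun j _ => hr j)).ne'
  exact mul_ne_zero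
    (pow_ne_zero 2 (div_ne_zero (by positivity) (mul_ne_zero (by positivity) hnorm)))
    (hsub ⟨hα, hαα₀⟩ i k hk)

/-- If `Z` is measurable, essentially bounded near `0`, differentiable at `0` with all
partial derivatives nonzero, then for all sufficiently small `α > 0` the integrals
`∫_{B_α} Z ψ_k^α ψ_{f_i(k)}^α` are nonzero for every `k ∈ ℕ^d` and every coordinate `i`. -/
theorem stmt6 (d : ℕ) (hd : 1 ≤ d) (r : Fin d → ℝ) (hr : ∀ i, 0 < r i)
    (Z : (Fin d → ℝ) → ℝ) (hZmeas : Measurable Z)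
    (hZbdd : ∃ U ∈ nhds (0 : Fin d → ℝ), ∃ C : ℝ, ∀ᵐ x ∂volume, x ∈ U → |Z x| ≤ C)
    (hZdiff : DifferentiableAt ℝ Z 0)
    (hZgrad : ∀ i : Fin d, fderiv ℝ Z 0 (Pi.single i 1) ≠ 0) :
    ∃ α₀ > 0, ∀ α : ℝ, 0 < α → α < α₀ →
      ∀ k : Fin d → ℕ, (∀ i, 1 ≤ k i) → ∀ i : Fin d,
        (∫ x in Set.univ.pi fun j => Set.Ioo 0 (α * r j),
            Z x * psiA d r α k x * psiA d r α (Function.update k i (k i + 1)) x) ≠ 0 :=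
  stmt6_general d r hr Z hZmeas hZdiff hZgrad
end

section
/- Let d ≥ 1, let W : ℝ^d → ℝ be measurable, essentially bounded on every bounded subset of ℝ^d, and suppose there exist C > 0 and α > 0 with |W(x)| ≤ C e^{α‖x‖} for almost every x ∈ ℝ^d. Let α' > α and K > 0, and let (φ_n)_{n∈ℕ} and φ be real-valued functions in L²(ℝ^d) such that ∫_{ℝ^d} e^{α'‖x‖} φ_n(x)² dx ≤ K for every n, ∫_{ℝ^d} e^{α'‖x‖} φ(x)² dx ≤ K, and φ_n → φ in L²(ℝ^d). Then √(|W|) φ_n → √(|W|) φ in L²(ℝ^d), i.e. ∫_{ℝ^d} |W(x)| (φ_n(x) − φ(x))² dx → 0 as n → ∞. -/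
/-!
For every radius `R`, `|W| ≤ M_R + C e^{-(α'-α)R} e^{α'‖x‖}` almost everywhere, where `M_R`
bounds `|W|` on the ball of radius `R`; outside the ball `e^{α‖x‖} ≤ e^{-(α'-α)R} e^{α'‖x‖}`.
The first term contributes `M_R ‖φ_n - φ‖₂² → 0`, the second at most `C e^{-(α'-α)R} · 4K`
uniformly in `n`, since `(a - b)² ≤ 2a² + 2b²`; this is small for large `R`.
-/

open MeasureTheory Filter Topology
open scoped ENNReal NNReal

theorem tendsto_lintegral_mul_of_forall_ae_le_add_mul {X : Type*} [MeasurableSpace X]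
    {μ : Measure X} {w ρ : X → ℝ≥0∞} {g : ℕ → X → ℝ≥0∞} {B : ℝ≥0∞} (hB : B ≠ ∞)
    (hg : ∀ n, AEMeasurable (g n) μ) (hρg : ∀ n, ∫⁻ x, ρ x * g n x ∂μ ≤ B)
    (hw : ∀ ε : ℝ≥0, 0 < ε → ∃ M : ℝ≥0, ∀ᵐ x ∂μ, w x ≤ M + ε * ρ x)
    (hg0 : Tendsto (fun n => ∫⁻ x, g n x ∂μ) atTop (𝓝 0)) :
    Tendsto (fun n => ∫⁻ x, w x * g n x ∂μ) atTop (𝓝 0) := by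
  rw [ENNReal.tendsto_nhds_zero]
  intro δ hδ
  obtain ⟨ε, hε, hεB⟩ := ENNReal.exists_nnreal_pos_mul_lt hB hδ.ne'
  obtain ⟨M, hM⟩ := hw ε hε
  have hlim : Tendsto (fun n => (M : ℝ≥0∞) * ∫⁻ x, g n x ∂μ + ε * B) atTop (𝓝 (ε * B)) := by
    simpa using (ENNReal.Tendsto.const_mul hg0 (Or.inr ENNReal.coe_ne_top)).add_const (ε * B)
  filter_upwards [hlim.eventually (gt_mem_nhds hεB)] with n hn
  refine le_of_lt (lt_of_le_of_lt ?_ hn)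
  calc ∫⁻ x, w x * g n x ∂μ
      ≤ ∫⁻ x, M * g n x + ε * (ρ x * g n x) ∂μ := by
        refine lintegral_mono_ae (hM.mono fun x hx => ?_)
        calc w x * g n x ≤ (M + ε * ρ x) * g n x := by gcongr
          _ = M * g n x + ε * (ρ x * g n x) := by ring
    _ = M * ∫⁻ x, g n x ∂μ + ε * ∫⁻ x, ρ x * g n x ∂μ := by
        rw [lintegral_add_left' ((hg n).const_mul _), lintegral_const_mul' _ _ ENNReal.coe_ne_top,
          lintegral_const_mul' _ _ ENNReal.coe_ne_top]
    _ ≤ M * ∫⁻ x, g n x ∂μ + ε * B := by gcongr; exact hρg n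

theorem exists_ae_abs_le_add_mul_exp_norm {E : Type*} [SeminormedAddCommGroup E]
    [MeasurableSpace E] {μ : Measure E} {W : E → ℝ}
    (hWloc : ∀ s : Set E, Bornology.IsBounded s → ∃ C : ℝ, ∀ᵐ x ∂μ, x ∈ s → |W x| ≤ C)
    {C α α' : ℝ} (hC : 0 ≤ C) (hW : ∀ᵐ x ∂μ, |W x| ≤ C * Real.exp (α * ‖x‖)) (hα' : α < α')
    {ε : ℝ} (hε : 0 < ε) :
    ∃ M : ℝ, ∀ᵐ x ∂μ, |W x| ≤ M + ε * Real.exp (α' * ‖x‖) := by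
  have hdecay : Tendsto (fun R => C * Real.exp ((α - α') * R)) atTop (𝓝 0) := by
    simpa using (Real.tendsto_exp_atBot.comp
      (tendsto_id.const_mul_atTop_of_neg (sub_neg.2 hα'))).const_mul C
  obtain ⟨R, hR⟩ := (hdecay.eventually (ge_mem_nhds hε)).exists
  obtain ⟨M, hM⟩ := hWloc (Metric.closedBall 0 R) Metric.isBounded_closedBall
  refine ⟨max M 0, ?_⟩
  filter_upwards [hW, hM] with x hWx hMx
  have hexp : 0 ≤ ε * Real.exp (α' * ‖x‖) := by positivity
  by_cases hx : ‖x‖ ≤ R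
  · have := hMx (mem_closedBall_zero_iff.2 hx)
    linarith [le_max_left M 0]
  · calc |W x| ≤ C * Real.exp (α * ‖x‖) := hWx
      _ = C * Real.exp ((α - α') * ‖x‖) * Real.exp (α' * ‖x‖) := by
        rw [mul_assoc, ← Real.exp_add]; ring_nf
      _ ≤ C * Real.exp ((α - α') * R) * Real.exp (α' * ‖x‖) := by
        have : (α - α') * ‖x‖ ≤ (α - α') * R :=
          mul_le_mul_of_nonpos_left (not_le.1 hx).le (sub_neg.2 hα').le
        gcongr
      _ ≤ ε * Real.exp (α' * ‖x‖) := by gcongr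
      _ ≤ max M 0 + ε * Real.exp (α' * ‖x‖) := le_add_of_nonneg_left (le_max_right M 0)

theorem lintegral_ofReal_mul_sub_sq_le {X : Type*} [MeasurableSpace X] {μ : Measure X}
    {ρ f g : X → ℝ} (hρ : ∀ x, 0 ≤ ρ x) (hρf : AEMeasurable (fun x => ρ x * f x ^ 2) μ) :
    ∫⁻ x, ENNReal.ofReal (ρ x * (f x - g x) ^ 2) ∂μ
      ≤ 2 * ∫⁻ x, ENNReal.ofReal (ρ x * f x ^ 2) ∂μ
        + 2 * ∫⁻ x, ENNReal.ofReal (ρ x * g x ^ 2) ∂μ := by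
  calc ∫⁻ x, ENNReal.ofReal (ρ x * (f x - g x) ^ 2) ∂μ
      ≤ ∫⁻ x, 2 * ENNReal.ofReal (ρ x * f x ^ 2) + 2 * ENNReal.ofReal (ρ x * g x ^ 2) ∂μ := by
        refine lintegral_mono fun x => ?_
        have hsq : ρ x * (f x - g x) ^ 2 ≤ 2 * (ρ x * f x ^ 2) + 2 * (ρ x * g x ^ 2) := by
          nlinarith [mul_nonneg (hρ x) (sq_nonneg (f x + g x))]
        calc ENNReal.ofReal (ρ x * (f x - g x) ^ 2)
            ≤ ENNReal.ofReal (2 * (ρ x * f x ^ 2)) + ENNReal.ofReal (2 * (ρ x * g x ^ 2)) :=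
              (ENNReal.ofReal_le_ofReal hsq).trans ENNReal.ofReal_add_le
          _ = _ := by simp only [ENNReal.ofReal_mul zero_le_two, ENNReal.ofReal_ofNat]
    _ = _ := by
        rw [lintegral_add_left' (hρf.ennreal_ofReal.const_mul 2),
          lintegral_const_mul' _ _ (by simp), lintegral_const_mul' _ _ (by simp)]

theorem stmt12_general (d : ℕ)
    (W : EuclideanSpace ℝ (Fin d) → ℝ)
    (hWloc : ∀ s : Set (EuclideanSpace ℝ (Fin d)), Bornology.IsBounded s →
      ∃ C : ℝ, ∀ᵐ x ∂volume, x ∈ s → |W x| ≤ C)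
    (C α : ℝ) (hC : 0 < C)
    (hW : ∀ᵐ x ∂volume, |W x| ≤ C * Real.exp (α * ‖x‖))
    (α' K : ℝ) (hα' : α < α')
    (φn : ℕ → EuclideanSpace ℝ (Fin d) → ℝ) (φ : EuclideanSpace ℝ (Fin d) → ℝ)
    (hφnmeas : ∀ n, Measurable (φn n)) (hφmeas : Measurable φ)
    (hbound : ∀ n, (∫⁻ x, ENNReal.ofReal (Real.exp (α' * ‖x‖) * (φn n x) ^ 2) ∂volume)
      ≤ ENNReal.ofReal K)
    (hboundφ : (∫⁻ x, ENNReal.ofReal (Real.exp (α' * ‖x‖) * (φ x) ^ 2) ∂volume)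
      ≤ ENNReal.ofReal K)
    (hconv : Tendsto (fun n => ∫⁻ x, ENNReal.ofReal ((φn n x - φ x) ^ 2) ∂volume)
      atTop (nhds 0)) :
    Tendsto (fun n => ∫⁻ x, ENNReal.ofReal (|W x| * (φn n x - φ x) ^ 2) ∂volume)
      atTop (nhds 0) := by
  have hexp : ∀ x : EuclideanSpace ℝ (Fin d), 0 ≤ Real.exp (α' * ‖x‖) := fun x => by positivity
  simp_rw [ENNReal.ofReal_mul (abs_nonneg _)]
  refine tendsto_lintegral_mul_of_forall_ae_le_add_mul
    (ρ := fun x => ENNReal.ofReal (Real.exp (α' * ‖x‖)))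
    (B := 2 * ENNReal.ofReal K + 2 * ENNReal.ofReal K) (by finiteness)
    (fun n => (((hφnmeas n).sub hφmeas).pow_const 2).ennreal_ofReal.aemeasurable)
    (fun n => ?_) (fun ε hε => ?_) hconv
  · simp_rw [← ENNReal.ofReal_mul (hexp _)]
    refine (lintegral_ofReal_mul_sub_sq_le hexp ?_).trans (by gcongr; exact hbound n)
    have hφn := hφnmeas n
    fun_prop
  · obtain ⟨M, hM⟩ := exists_ae_abs_le_add_mul_exp_norm hWloc hC.le hW hα' hε
    refine ⟨M.toNNReal, hM.mono fun x hx => ?_⟩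
    calc ENNReal.ofReal |W x| ≤ ENNReal.ofReal (M + ε * Real.exp (α' * ‖x‖)) :=
          ENNReal.ofReal_le_ofReal hx
      _ ≤ ENNReal.ofReal M + ENNReal.ofReal (ε * Real.exp (α' * ‖x‖)) := ENNReal.ofReal_add_le
      _ = _ := by rw [ENNReal.ofReal_mul (NNReal.coe_nonneg ε), ENNReal.ofReal_coe_nnreal]; rfl

/-- If `|W| ≤ C e^{α‖x‖}`, `W` is essentially bounded on bounded sets, the functions
`φ_n, φ` satisfy uniform exponentially weighted bounds with weight `e^{α'‖x‖}`, `α' > α`,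
and `φ_n → φ` in `L²`, then `√|W| φ_n → √|W| φ` in `L²`, i.e.
`∫ |W| (φ_n − φ)² → 0`. -/
theorem stmt12 (d : ℕ) (hd : 1 ≤ d)
    (W : EuclideanSpace ℝ (Fin d) → ℝ) (hWmeas : Measurable W)
    (hWloc : ∀ s : Set (EuclideanSpace ℝ (Fin d)), Bornology.IsBounded s →
      ∃ C : ℝ, ∀ᵐ x ∂volume, x ∈ s → |W x| ≤ C)
    (C α : ℝ) (hC : 0 < C) (hα : 0 < α)
    (hW : ∀ᵐ x ∂volume, |W x| ≤ C * Real.exp (α * ‖x‖))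
    (α' K : ℝ) (hα' : α < α') (hK : 0 < K)
    (φn : ℕ → EuclideanSpace ℝ (Fin d) → ℝ) (φ : EuclideanSpace ℝ (Fin d) → ℝ)
    (hφnmeas : ∀ n, Measurable (φn n)) (hφmeas : Measurable φ)
    (hbound : ∀ n, (∫⁻ x, ENNReal.ofReal (Real.exp (α' * ‖x‖) * (φn n x) ^ 2) ∂volume)
      ≤ ENNReal.ofReal K)
    (hboundφ : (∫⁻ x, ENNReal.ofReal (Real.exp (α' * ‖x‖) * (φ x) ^ 2) ∂volume)
      ≤ ENNReal.ofReal K)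
    (hconv : Tendsto (fun n => ∫⁻ x, ENNReal.ofReal ((φn n x - φ x) ^ 2) ∂volume)
      atTop (nhds 0)) :
    Tendsto (fun n => ∫⁻ x, ENNReal.ofReal (|W x| * (φn n x - φ x) ^ 2) ∂volume)
      atTop (nhds 0) :=
  stmt12_general d W hWloc C α hC hW α' K hα' φn φ hφnmeas hφmeas hbound hboundφ hconv
end
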